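/- arXiv:1711.09426 — 2 statements merged into one kernel-verified Lean document; each statement's English description precedes it below -/
import Mathlib

section
/- For every positive integer d and α ∈ (0,1) there is a constant K (depending only on d and α) such that the following holds. Let n ≥ 2k − t, k ≥ t ≥ max{αk, d} be positive integers, Σ a finite alphabet, and let {f_S : binom(S,≤d) → Σ | S ∈ binom([n],k)} satisfy Pr_{(S₁,S₂)∼ν_{n,k,t}}[f_{S₁} ≁ f_{S₂}] ≤ ε. For disjoint sets T, A ⊆ [n] with |T| = t − d and |A| = i (0 ≤ i ≤ d), define ε_{T,A} := Pr[ f_{S₁}|_{T,i−1} ∼ f_{S₂}|_{T,i−1} and f_{S₁}|_{T,A} ≁ f_{S₂}|_{T,A} ] where (S₁,S₂)∼ν_{n,k,t} conditioned on S₁∩S₂ ⊇ T∪A; here f_{S₁}|_{T,A} ∼ f_{S₂}|_{T,A} means f_{S₁}(U) = f_{S₂}(U) for all U ∈ binom(S₁∩S₂,≤d) with U∖T ⊆ A. Then E_{T,A}[ε_{T,A}] ≤ K·k^{−i}·ε, where the expectation is over uniformly random disjoint pairs (T,A) with |T| = t−d and |A| = i. -/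
open Finset

/-- The family of `k`-element subsets of `[n]` (modeled as `Fin n`). -/
def ksets (n k : ℕ) : Finset (Finset (Fin n)) := Finset.univ.powersetCard k

/-- The support of `ν_{n,k,t}`: ordered pairs of `k`-element subsets of `[n]`
with intersection of size exactly `t` (the distribution is uniform on this set). -/
def nupairs (n k t : ℕ) : Finset (Finset (Fin n) × Finset (Fin n)) :=
  ((ksets n k) ×ˢ (ksets n k)).filter (fun P => (P.1 ∩ P.2).card = t)

/-- `ε_{T,A}`: probability, over `(S₁,S₂) ∼ ν_{n,k,t}` conditioned on
`S₁ ∩ S₂ ⊇ T ∪ A`, that `f_{S₁}|_{T,i-1} ∼ f_{S₂}|_{T,i-1}` (agreement on all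
`U ⊆ S₁ ∩ S₂` with `|U| ≤ d`, `|U ∖ T| < i`) but `f_{S₁}|_{T,A} ≁ f_{S₂}|_{T,A}`
(disagreement at some `U ⊆ S₁ ∩ S₂` with `|U| ≤ d`, `U ∖ T ⊆ A`). -/
noncomputable def epsTA (n k t d i : ℕ) (Γ : Type) [DecidableEq Γ]
    (f : Finset (Fin n) → Finset (Fin n) → Γ) (T A : Finset (Fin n)) : ℝ :=
  (((nupairs n k t).filter
      (fun P => T ∪ A ⊆ P.1 ∩ P.2 ∧
        (∀ U ⊆ P.1 ∩ P.2, U.card ≤ d → (U \ T).card < i → f P.1 U = f P.2 U) ∧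
        ¬ ∀ U ⊆ P.1 ∩ P.2, U.card ≤ d → U \ T ⊆ A → f P.1 U = f P.2 U)).card : ℝ) /
  (((nupairs n k t).filter (fun P => T ∪ A ⊆ P.1 ∩ P.2)).card : ℝ)

/-- Uniformly random disjoint pairs `(T,A)` with `|T| = m` and `|A| = i`. -/
def TApairs (n m i : ℕ) : Finset (Finset (Fin n) × Finset (Fin n)) :=
  ((Finset.univ.powersetCard m) ×ˢ (Finset.univ.powersetCard i)).filter
    (fun P => Disjoint P.1 P.2)

/-!
Fix for every disagreeing pair `R = (S₁, S₂)` a witness `W ⊆ S₁ ∩ S₂`, `|W| ≤ d`, on which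
`f_{S₁}` and `f_{S₂}` differ. If `R` counts towards `ε_{T,A}`, then `f_{S₁}` and `f_{S₂}` agree
on every `U` with `|U \ T| < i`, so `|W \ T| ≥ i`. For a fixed `R` at most
`C(d,i)² C(t-i,t-d)` pairs `(T,A)` inside `S₁ ∩ S₂` have this property, whereas `S₁ ∩ S₂`
contains `C(t,d) C(d,i)` pairs `(T,A)` in all. By symmetry under permutations of `[n]`, the
number of pairs of `ν_{n,k,t}` whose intersection contains `T ∪ A` does not depend on `(T,A)`,
so double counting gives `E[ε_{T,A}] ≤ ε C(d,i)² / C(t,i)`; finally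
`C(t,i) ≥ t^i / d^{2i} ≥ (αk)^i / d^{2i}`.
-/

lemma card_filter_powersetCard_le_choose_mul_choose {α : Type*} [DecidableEq α] (i a : ℕ)
    {U I : Finset α} (hUI : U ⊆ I) :
    #{T ∈ I.powersetCard a | i ≤ #(U \ T)} ≤ (#U).choose i * (#I - i).choose a := by
  calc #{T ∈ I.powersetCard a | i ≤ #(U \ T)}
      ≤ #((U.powersetCard i).biUnion fun J => (I \ J).powersetCard a) := by
        refine card_le_card fun T hT => ?_
        obtain ⟨⟨hTI, hTa⟩, hUT⟩ := by simpa only [mem_filter, mem_powersetCard] using hT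
        obtain ⟨J, hJ, hJi⟩ := exists_subset_card_eq hUT
        simp only [mem_biUnion, mem_powersetCard]
        exact ⟨J, ⟨hJ.trans sdiff_subset, hJi⟩,
          subset_sdiff.2 ⟨hTI, disjoint_of_subset_right hJ disjoint_sdiff⟩, hTa⟩
    _ ≤ ∑ J ∈ U.powersetCard i, #((I \ J).powersetCard a) := card_biUnion_le
    _ = (#U).choose i * (#I - i).choose a := by
        rw [sum_congr rfl fun J hJ => by
          rw [card_powersetCard, card_sdiff_of_subset ((mem_powersetCard.1 hJ).1.trans hUI),
            (mem_powersetCard.1 hJ).2],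
          sum_const, card_powersetCard, smul_eq_mul]

lemma Nat.pow_le_sq_pow_mul_choose {d i t : ℕ} (hd : 0 < d) (hi : i ≤ d) (hdt : d ≤ t) :
    t ^ i ≤ (d ^ 2) ^ i * t.choose i := by
  have hbase : t ≤ d * (t + 1 - i) := by
    obtain ⟨s, rfl⟩ := Nat.exists_eq_add_of_le (hi.trans hdt)
    rw [show i + s + 1 - i = s + 1 by omega]
    nlinarith
  calc t ^ i ≤ (d * (t + 1 - i)) ^ i := Nat.pow_le_pow_left hbase i
    _ = d ^ i * (t + 1 - i) ^ i := mul_pow ..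
    _ ≤ d ^ i * (i.factorial * t.choose i) := by
        rw [← Nat.descFactorial_eq_factorial_mul_choose]
        gcongr
        exact Nat.pow_sub_le_descFactorial t i
    _ ≤ d ^ i * (d ^ i * t.choose i) := by
        gcongr
        exact (Nat.factorial_le_pow i).trans (Nat.pow_le_pow_left hi i)
    _ = (d ^ 2) ^ i * t.choose i := by ring

lemma pow_le_sq_div_pow_mul_choose {d i k t : ℕ} {α : ℝ} (hd : 0 < d) (hα0 : 0 < α) (hα1 : α < 1)
    (hi : i ≤ d) (hdt : d ≤ t) (hαk : α * k ≤ t) :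
    (k : ℝ) ^ i ≤ (d ^ 2 / α) ^ d * t.choose i := by
  have hαpow : 0 < α ^ i := pow_pos hα0 i
  have hbase : 1 ≤ (d : ℝ) ^ 2 / α := by
    rw [le_div_iff₀ hα0, one_mul]
    have : (1 : ℝ) ≤ d := by exact_mod_cast hd
    nlinarith
  calc (k : ℝ) ^ i = (α * k) ^ i / α ^ i := by rw [mul_pow, mul_div_cancel_left₀ _ hαpow.ne']
    _ ≤ ((d ^ 2) ^ i * t.choose i : ℕ) / α ^ i := by
        gcongr
        calc (α * k) ^ i ≤ (t : ℝ) ^ i := by gcongr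
          _ ≤ _ := by exact_mod_cast Nat.pow_le_sq_pow_mul_choose hd hi hdt
    _ = ((d : ℝ) ^ 2 / α) ^ i * t.choose i := by push_cast; rw [div_pow, mul_div_right_comm]
    _ ≤ ((d : ℝ) ^ 2 / α) ^ d * t.choose i := by gcongr

lemma choose_mul_pow_le {d i k t : ℕ} {α : ℝ} (hd : 0 < d) (hα0 : 0 < α) (hα1 : α < 1)
    (hi : i ≤ d) (hdt : d ≤ t) (hαk : α * k ≤ t) :
    (d.choose i * (t - i).choose (t - d) * d.choose i : ℝ) * k ^ i ≤
      (4 * d ^ 2 / α) ^ d * (t.choose d * d.choose i) := by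
  have hsq : (d.choose i : ℝ) ^ 2 ≤ 4 ^ d := by
    have h : (d.choose i : ℝ) ≤ 2 ^ d := by exact_mod_cast Nat.choose_le_two_pow d i
    calc (d.choose i : ℝ) ^ 2 ≤ ((2 : ℝ) ^ d) ^ 2 := by gcongr
      _ = 4 ^ d := by rw [← pow_mul, mul_comm, pow_mul]; norm_num
  have hmul : (t.choose d * d.choose i : ℝ) = t.choose i * (t - i).choose (d - i) := by
    exact_mod_cast Nat.choose_mul hi
  rw [Nat.choose_symm_of_eq_add (show t - i = t - d + (d - i) by omega), hmul]
  calc (d.choose i * (t - i).choose (d - i) * d.choose i : ℝ) * k ^ i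
      = (d.choose i : ℝ) ^ 2 * k ^ i * (t - i).choose (d - i) := by ring
    _ ≤ 4 ^ d * ((d ^ 2 / α) ^ d * t.choose i) * (t - i).choose (d - i) := by
        gcongr
        exact pow_le_sq_div_pow_mul_choose hd hα0 hα1 hi hdt hαk
    _ = (4 * d ^ 2 / α) ^ d * (t.choose i * (t - i).choose (d - i)) := by
        rw [mul_div_assoc, mul_pow]; ring

section

variable {n k t : ℕ}

def nupairsOver (n k t : ℕ) (B : Finset (Fin n)) : Finset (Finset (Fin n) × Finset (Fin n)) :=
  (nupairs n k t).filter (fun P => B ⊆ P.1 ∩ P.2)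

def disagreePairs (n k t d : ℕ) {Γ : Type} [DecidableEq Γ]
    (f : Finset (Fin n) → Finset (Fin n) → Γ) : Finset (Finset (Fin n) × Finset (Fin n)) :=
  (nupairs n k t).filter (fun P => ¬ ∀ A ⊆ P.1 ∩ P.2, A.card ≤ d → f P.1 A = f P.2 A)

lemma mem_nupairs {P : Finset (Fin n) × Finset (Fin n)} :
    P ∈ nupairs n k t ↔ #P.1 = k ∧ #P.2 = k ∧ #(P.1 ∩ P.2) = t := by
  simp [nupairs, ksets, and_assoc]

lemma mem_nupairsOver {B : Finset (Fin n)} {P : Finset (Fin n) × Finset (Fin n)} :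
    P ∈ nupairsOver n k t B ↔ P ∈ nupairs n k t ∧ B ⊆ P.1 ∩ P.2 :=
  mem_filter

lemma mem_TApairs {a b : ℕ} {Q : Finset (Fin n) × Finset (Fin n)} :
    Q ∈ TApairs n a b ↔ #Q.1 = a ∧ #Q.2 = b ∧ Disjoint Q.1 Q.2 := by
  simp [TApairs, and_assoc]

lemma nupairsOver_nonempty (htk : t ≤ k) (hn : 2 * k ≤ n + t) {B : Finset (Fin n)}
    (hB : #B ≤ t) : (nupairsOver n k t B).Nonempty := by
  obtain ⟨I, hBI, -, hI⟩ := exists_subsuperset_card_eq (subset_univ B) hB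
    (show t ≤ #(univ : Finset (Fin n)) by simp; omega)
  obtain ⟨S₁, hIS₁, -, hS₁⟩ := exists_subsuperset_card_eq (subset_univ I)
    (show #I ≤ k by omega) (show k ≤ #(univ : Finset (Fin n)) by simp; omega)
  obtain ⟨C, hC, hCcard⟩ := exists_subset_card_eq
    (show k - t ≤ #S₁ᶜ by rw [card_compl, hS₁, Fintype.card_fin]; omega)
  have hCS₁ : Disjoint S₁ C := disjoint_of_subset_right hC disjoint_compl_right
  have hI₂ : S₁ ∩ (I ∪ C) = I := by
    rw [inter_union_distrib_left, disjoint_iff_inter_eq_empty.1 hCS₁, union_empty,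
      inter_eq_right.2 hIS₁]
  refine ⟨(S₁, I ∪ C), mem_nupairsOver.2 ⟨mem_nupairs.2 ⟨hS₁, ?_, ?_⟩, ?_⟩⟩
  · rw [card_union_of_disjoint (disjoint_of_subset_left hIS₁ hCS₁), hI, hCcard]; omega
  · simpa [hI₂] using hI
  · simpa [hI₂] using hBI

lemma card_nupairsOver_map (σ : Equiv.Perm (Fin n)) (B : Finset (Fin n)) :
    #(nupairsOver n k t (B.map σ.toEmbedding)) = #(nupairsOver n k t B) := by
  symm
  refine card_equiv (σ.finsetCongr.prodCongr σ.finsetCongr) fun P => ?_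
  simp [mem_nupairsOver, mem_nupairs, ← map_inter]

lemma card_nupairsOver_congr {B B' : Finset (Fin n)} (h : #B = #B') :
    #(nupairsOver n k t B) = #(nupairsOver n k t B') := by
  obtain ⟨σ, rfl⟩ := Equiv.Perm.exists_map_finset_eq B B' h
  exact (card_nupairsOver_map σ B).symm

lemma card_filter_TApairs_subset {a b : ℕ} (I : Finset (Fin n)) (p : Finset (Fin n) → Prop)
    [DecidablePred p] :
    #{Q ∈ TApairs n a b | Q.1 ∪ Q.2 ⊆ I ∧ p Q.1} =
      #{T ∈ I.powersetCard a | p T} * (#I - a).choose b := by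
  rw [card_eq_sum_card_fiberwise (f := Prod.fst) (t := {T ∈ I.powersetCard a | p T}),
    ← smul_eq_mul, ← sum_const]
  swap
  · intro Q hQ
    simp only [coe_filter, Set.mem_ofPred_eq, mem_TApairs, union_subset_iff] at hQ
    simp only [coe_filter, Set.mem_ofPred_eq, mem_powersetCard]
    exact ⟨⟨hQ.2.1.1, hQ.1.1⟩, hQ.2.2⟩
  refine sum_congr rfl fun T hT => ?_
  obtain ⟨⟨hTI, hTa⟩, hpT⟩ := by simpa only [mem_filter, mem_powersetCard] using hT
  have hfiber : ({Q ∈ TApairs n a b | Q.1 ∪ Q.2 ⊆ I ∧ p Q.1}.filter fun Q => Q.1 = T) =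
      ((I \ T).powersetCard b).map (Function.Embedding.sectR T _) := by
    ext ⟨T', A⟩
    simp only [mem_filter, mem_TApairs, mem_map, mem_powersetCard, subset_sdiff,
      Function.Embedding.sectR_apply, Prod.mk.injEq, union_subset_iff]
    constructor
    · rintro ⟨⟨⟨-, hA, hdisj⟩, ⟨-, hAI⟩, -⟩, rfl⟩
      exact ⟨A, ⟨⟨hAI, hdisj.symm⟩, hA⟩, rfl, rfl⟩
    · rintro ⟨A, ⟨⟨hAI, hdisj⟩, hA⟩, rfl, rfl⟩
      exact ⟨⟨⟨hTa, hA, hdisj.symm⟩, ⟨hTI, hAI⟩, hpT⟩, rfl⟩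
  rw [hfiber, card_map, card_powersetCard, card_sdiff_of_subset hTI, hTa]

lemma card_filter_TApairs_le {d i : ℕ} (hdt : d ≤ t) {U I : Finset (Fin n)} (hI : #I = t)
    (hUI : U ⊆ I) (hU : #U ≤ d) :
    #{Q ∈ TApairs n (t - d) i | Q.1 ∪ Q.2 ⊆ I ∧ i ≤ #(U \ Q.1)} ≤
      d.choose i * (t - i).choose (t - d) * d.choose i := by
  rw [card_filter_TApairs_subset I fun T => i ≤ #(U \ T), hI, Nat.sub_sub_self hdt]
  gcongr
  calc _ ≤ (#U).choose i * (#I - i).choose (t - d) :=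
        card_filter_powersetCard_le_choose_mul_choose i _ hUI
    _ ≤ d.choose i * (t - i).choose (t - d) := by rw [hI]; gcongr

lemma sum_card_nupairsOver_TApairs (a b : ℕ) :
    ∑ Q ∈ TApairs n a b, #(nupairsOver n k t (Q.1 ∪ Q.2)) =
      #(nupairs n k t) * (t.choose a * (t - a).choose b) := by
  calc ∑ Q ∈ TApairs n a b, #(nupairsOver n k t (Q.1 ∪ Q.2))
      = ∑ P ∈ nupairs n k t, #{Q ∈ TApairs n a b | Q.1 ∪ Q.2 ⊆ P.1 ∩ P.2} :=
        sum_card_bipartiteAbove_eq_sum_card_bipartiteBelow _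
    _ = ∑ P ∈ nupairs n k t, t.choose a * (t - a).choose b := by
        refine sum_congr rfl fun P hP => ?_
        have h := card_filter_TApairs_subset (a := a) (b := b) (P.1 ∩ P.2) fun _ => True
        simp only [and_true, filter_true] at h
        rw [h, card_powersetCard, (mem_nupairs.1 hP).2.2]
    _ = #(nupairs n k t) * (t.choose a * (t - a).choose b) := by rw [sum_const, smul_eq_mul]

lemma card_nupairsOver_mul_card_TApairs {d i : ℕ} (hdt : d ≤ t) {B : Finset (Fin n)}
    (hB : #B = t - d + i) :
    #(nupairsOver n k t B) * #(TApairs n (t - d) i) =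
      #(nupairs n k t) * (t.choose d * d.choose i) := by
  have hsum := sum_card_nupairsOver_TApairs (n := n) (k := k) (t := t) (t - d) i
  rw [Nat.sub_sub_self hdt, Nat.choose_symm hdt] at hsum
  rw [← hsum, mul_comm, ← smul_eq_mul, ← sum_const]
  refine sum_congr rfl fun Q hQ => ?_
  obtain ⟨hT, hA, hdisj⟩ := mem_TApairs.1 hQ
  exact card_nupairsOver_congr (by rw [hB, card_union_of_disjoint hdisj, hT, hA])

section Witness

variable {d i : ℕ} {Γ : Type} [DecidableEq Γ] {f : Finset (Fin n) → Finset (Fin n) → Γ}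

lemma exists_disagreement_witness :
    ∃ W : Finset (Fin n) × Finset (Fin n) → Finset (Fin n), ∀ R ∈ disagreePairs n k t d f,
      W R ⊆ R.1 ∩ R.2 ∧ #(W R) ≤ d ∧ f R.1 (W R) ≠ f R.2 (W R) := by
  choose! W hW using fun R (hR : R ∈ disagreePairs n k t d f) => by
    simpa [disagreePairs] using (mem_filter.1 hR).2
  exact ⟨W, hW⟩

lemma epsTA_mul_card_nupairsOver_le {W : Finset (Fin n) × Finset (Fin n) → Finset (Fin n)}
    (hW : ∀ R ∈ disagreePairs n k t d f,
      W R ⊆ R.1 ∩ R.2 ∧ #(W R) ≤ d ∧ f R.1 (W R) ≠ f R.2 (W R))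
    (T A : Finset (Fin n)) :
    epsTA n k t d i Γ f T A * #(nupairsOver n k t (T ∪ A)) ≤
      #{R ∈ disagreePairs n k t d f | T ∪ A ⊆ R.1 ∩ R.2 ∧ i ≤ #(W R \ T)} := by
  rw [epsTA, ← nupairsOver]
  rcases eq_or_ne (#(nupairsOver n k t (T ∪ A)) : ℝ) 0 with h | h
  · simp [h]
  rw [div_mul_cancel₀ _ h, Nat.cast_le]
  refine card_le_card fun R hR => ?_
  obtain ⟨hR, hTA, hagree, hdis⟩ := mem_filter.1 hR
  have hRbad : R ∈ disagreePairs n k t d f :=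
    mem_filter.2 ⟨hR, fun hall => hdis fun U hU hUd _ => hall U hU hUd⟩
  obtain ⟨hWR, hWd, hWf⟩ := hW R hRbad
  exact mem_filter.2 ⟨hRbad, hTA, not_lt.1 fun hlt => hWf (hagree _ hWR hWd hlt)⟩

lemma sum_epsTA_mul_card_nupairsOver_le (hdt : d ≤ t) {B : Finset (Fin n)}
    (hB : #B = t - d + i) :
    (∑ Q ∈ TApairs n (t - d) i, epsTA n k t d i Γ f Q.1 Q.2) * #(nupairsOver n k t B) ≤
      #(disagreePairs n k t d f) * (d.choose i * (t - i).choose (t - d) * d.choose i) := by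
  obtain ⟨W, hW⟩ := exists_disagreement_witness (n := n) (k := k) (t := t) (d := d) (f := f)
  have hcount : ∀ R ∈ disagreePairs n k t d f,
      #{Q ∈ TApairs n (t - d) i | Q.1 ∪ Q.2 ⊆ R.1 ∩ R.2 ∧ i ≤ #(W R \ Q.1)} ≤
        d.choose i * (t - i).choose (t - d) * d.choose i := fun R hR =>
    card_filter_TApairs_le hdt (mem_nupairs.1 (mem_filter.1 hR).1).2.2 (hW R hR).1 (hW R hR).2.1
  calc (∑ Q ∈ TApairs n (t - d) i, epsTA n k t d i Γ f Q.1 Q.2) * #(nupairsOver n k t B)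
      = ∑ Q ∈ TApairs n (t - d) i,
          epsTA n k t d i Γ f Q.1 Q.2 * #(nupairsOver n k t (Q.1 ∪ Q.2)) := by
        rw [sum_mul]
        refine sum_congr rfl fun Q hQ => ?_
        obtain ⟨hT, hA, hdisj⟩ := mem_TApairs.1 hQ
        rw [card_nupairsOver_congr (B := B) (B' := Q.1 ∪ Q.2)
          (by rw [card_union_of_disjoint hdisj, hT, hA, hB])]
    _ ≤ ∑ Q ∈ TApairs n (t - d) i,
          (#{R ∈ disagreePairs n k t d f | Q.1 ∪ Q.2 ⊆ R.1 ∩ R.2 ∧ i ≤ #(W R \ Q.1)} : ℝ) :=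
        sum_le_sum fun Q _ => epsTA_mul_card_nupairsOver_le hW Q.1 Q.2
    _ = ∑ R ∈ disagreePairs n k t d f,
          (#{Q ∈ TApairs n (t - d) i | Q.1 ∪ Q.2 ⊆ R.1 ∩ R.2 ∧ i ≤ #(W R \ Q.1)} : ℝ) := by
        exact_mod_cast sum_card_bipartiteAbove_eq_sum_card_bipartiteBelow _
    _ ≤ #(disagreePairs n k t d f) * (d.choose i * (t - i).choose (t - d) * d.choose i) := by
        have h := sum_le_card_nsmul _ _ _ hcount
        rw [smul_eq_mul] at h
        exact_mod_cast h

end Witness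

end

/-- `E_{T,A}[ε_{T,A}] ≤ K·k^{-i}·ε`, over uniformly random disjoint pairs `(T,A)`
with `|T| = t-d`, `|A| = i`.  The bound is written with denominators cleared:
the expectation is the displayed sum divided by `(TApairs n (t-d) i).card`. -/
theorem stmt10 :
    ∀ (d : ℕ), 0 < d → ∀ α : ℝ, α ∈ Set.Ioo (0:ℝ) 1 →
      ∃ K : ℝ,
        ∀ (n k t : ℕ), t ≤ k → 2 * k ≤ n + t →
          α * (k : ℝ) ≤ (t : ℝ) → d ≤ t →
          ∀ (Γ : Type) [Fintype Γ] [DecidableEq Γ]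
            (f : Finset (Fin n) → Finset (Fin n) → Γ) (ε : ℝ),
            (((nupairs n k t).filter
                (fun P => ¬ ∀ A ⊆ P.1 ∩ P.2, A.card ≤ d → f P.1 A = f P.2 A)).card : ℝ) ≤
              ε * ((nupairs n k t).card : ℝ) →
            ∀ i : ℕ, i ≤ d →
              (∑ P ∈ TApairs n (t-d) i, epsTA n k t d i Γ f P.1 P.2) * (k : ℝ)^i ≤
                K * ε * ((TApairs n (t-d) i).card : ℝ) := by
  intro d hd α ⟨hα0, hα1⟩
  refine ⟨(4 * d ^ 2 / α) ^ d, fun n k t htk hn hαk hdt Γ _ _ f ε hε i hi => ?_⟩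
  obtain ⟨B, -, hB⟩ := exists_subset_card_eq (s := (univ : Finset (Fin n))) (n := t - d + i)
    (by rw [card_univ, Fintype.card_fin]; omega)
  have hD : (0 : ℝ) < #(nupairsOver n k t B) := by
    exact_mod_cast (nupairsOver_nonempty htk hn (by omega)).card_pos
  have hεQ : 0 ≤ ε * #(nupairs n k t) := (Nat.cast_nonneg _).trans hε
  have hsum := sum_epsTA_mul_card_nupairsOver_le (k := k) (Γ := Γ) (f := f) hdt hB
  have hcard : (#(nupairsOver n k t B) * #(TApairs n (t - d) i) : ℝ) =
      #(nupairs n k t) * (t.choose d * d.choose i) := by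
    exact_mod_cast card_nupairsOver_mul_card_TApairs hdt hB
  refine le_of_mul_le_mul_right ?_ hD
  calc (∑ P ∈ TApairs n (t - d) i, epsTA n k t d i Γ f P.1 P.2) * k ^ i * #(nupairsOver n k t B)
      = ((∑ P ∈ TApairs n (t - d) i, epsTA n k t d i Γ f P.1 P.2) *
          #(nupairsOver n k t B)) * k ^ i := by ring
    _ ≤ #(disagreePairs n k t d f) * (d.choose i * (t - i).choose (t - d) * d.choose i) * k ^ i :=
        mul_le_mul_of_nonneg_right hsum (by positivity)
    _ ≤ ε * #(nupairs n k t) * ((d.choose i * (t - i).choose (t - d) * d.choose i) * k ^ i) := by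
        rw [mul_assoc]
        exact mul_le_mul_of_nonneg_right hε (by positivity)
    _ ≤ ε * #(nupairs n k t) * ((4 * d ^ 2 / α) ^ d * (t.choose d * d.choose i)) :=
        mul_le_mul_of_nonneg_left (choose_mul_pow_le hd hα0 hα1 hi hdt hαk) hεQ
    _ = (4 * d ^ 2 / α) ^ d * ε * #(TApairs n (t - d) i) * #(nupairsOver n k t B) := by
        rw [mul_assoc _ (#(TApairs n (t - d) i) : ℝ), mul_comm (#(TApairs n (t - d) i) : ℝ),
          hcard]
        ring
end

section
/- For every positive integer d, every c > 0 and every p ∈ (0,1) the following holds. Let H be a d-uniform hypergraph on a finite vertex set. Then either H has a subhypergraph H′ ⊆ H with branching factor c/p such that hit_p(H′) ≥ hit_p(H)/(d+1), or there exist an integer 1 ≤ r ≤ d, a (d−r)-uniform hypergraph I, and a subhypergraph H′ ⊆ H such that: (1) every e ∈ I has at least (c/p)^r extensions in H′; (2) for every e ∈ I and every nonempty set A disjoint from e, the set e ∪ A has at most (c/p)^{r−|A|} extensions in H′; and (3) hit_p(I) ≥ hit_p(H)/(d+1). -/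
open Finset

/-- `hitp V p H = Pr_{S ∼ µ_p}[H|_S ≠ ∅]`, where `µ_p` puts each vertex of `V`
in `S` independently with probability `p`, and `H|_S = {e ∈ H : e ⊆ S}`. -/
def hitp (V : Type) [Fintype V] [DecidableEq V] (p : ℝ) (H : Finset (Finset V)) : ℝ :=
  ∑ S : Finset V,
    if (H.filter (fun e => e ⊆ S)).Nonempty then
      p ^ S.card * (1 - p) ^ (Fintype.card V - S.card)
    else 0

/-- `H` has branching factor `ρ`: for every `A` and `r ≥ 0`, the number of
hyperedges `e ∈ H` with `e ⊇ A` and `|e| = |A| + r` is at most `ρ^r`. -/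
def branching (V : Type) [DecidableEq V] (H : Finset (Finset V)) (ρ : ℝ) : Prop :=
  ∀ (A : Finset V) (r : ℕ),
    ((H.filter (fun e => A ⊆ e ∧ e.card = A.card + r)).card : ℝ) ≤ ρ ^ r

/-!
Peel `H` level by level with `ρ = c / p`. At level `k + 1`, the heavy sets are the
`(d - (k + 1))`-sets having at least `ρ ^ (k + 1)` extensions among the surviving edges,
and every surviving edge containing a heavy set is removed. After `d` levels the survivors
have branching factor `ρ`: a set with too many extensions of some size would have been heavy
at that level, and then none of its extensions survives. A heavy set `B` of level `k + 1`
has few extensions `B ∪ A` among the edges surviving level `k`, since `B ∪ A` would otherwise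
have been heavy, hence removed, at an earlier level. Every edge of `H` either survives or
contains a heavy set, so by the union bound `hit_p(H)` is at most the sum of the `d + 1`
hitting probabilities of the survivors and of the heavy families, and one of them carries at
least a `1 / (d + 1)` share.
-/

lemma le_or_exists_le_of_le_add_sum {ι : Type*} {s : Finset ι} {a x : ℝ} {y : ι → ℝ}
    (h : a ≤ x + ∑ i ∈ s, y i) :
    a / (#s + 1) ≤ x ∨ ∃ i ∈ s, a / (#s + 1) ≤ y i := by
  by_contra! ⟨hx, hy⟩
  have hsum : ∑ i ∈ s, y i ≤ #s * (a / (#s + 1)) := by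
    simpa using sum_le_card_nsmul s y _ fun i hi => (hy i hi).le
  have hsplit : a / (#s + 1) + #s * (a / (#s + 1)) = a := by
    field_simp
    ring
  linarith

section Hitting

variable {V : Type} [Fintype V] [DecidableEq V] {p : ℝ}

lemma hitp_empty : hitp V p ∅ = 0 := by
  simp [hitp]

lemma hitp_le_of_forall_exists_subset (hp₀ : 0 ≤ p) (hp₁ : p ≤ 1)
    {H K : Finset (Finset V)} (h : ∀ e ∈ H, ∃ f ∈ K, f ⊆ e) :
    hitp V p H ≤ hitp V p K := by
  refine sum_le_sum fun S _ => ?_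
  have hw : 0 ≤ p ^ S.card * (1 - p) ^ (Fintype.card V - S.card) := by
    have : 0 ≤ 1 - p := by linarith
    positivity
  split_ifs with hH hK
  · exact le_rfl
  · obtain ⟨e, he⟩ := hH
    obtain ⟨f, hfK, hfe⟩ := h e (mem_filter.1 he).1
    exact absurd ⟨f, mem_filter.2 ⟨hfK, hfe.trans (mem_filter.1 he).2⟩⟩ hK
  · exact hw
  · exact le_rfl

lemma hitp_union_le (hp₀ : 0 ≤ p) (hp₁ : p ≤ 1) (K L : Finset (Finset V)) :
    hitp V p (K ∪ L) ≤ hitp V p K + hitp V p L := by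
  rw [hitp, hitp, hitp, ← sum_add_distrib]
  refine sum_le_sum fun S _ => ?_
  have hw : 0 ≤ p ^ S.card * (1 - p) ^ (Fintype.card V - S.card) := by
    have : 0 ≤ 1 - p := by linarith
    positivity
  simp only [filter_union, union_nonempty]
  split_ifs <;> simp_all

lemma hitp_biUnion_le (hp₀ : 0 ≤ p) (hp₁ : p ≤ 1) {ι : Type*} [DecidableEq ι]
    (s : Finset ι) (F : ι → Finset (Finset V)) :
    hitp V p (s.biUnion F) ≤ ∑ i ∈ s, hitp V p (F i) := by
  induction s using Finset.induction_on with
  | empty => simp [hitp_empty]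
  | insert i s hi ih =>
    rw [biUnion_insert, sum_insert hi]
    linarith [hitp_union_le hp₀ hp₁ (F i) (s.biUnion F)]

end Hitting

section Extensions

variable {V : Type} [DecidableEq V] {d : ℕ}

def extensions (G : Finset (Finset V)) (B : Finset V) : Finset (Finset V) :=
  G.filter fun e => B ⊆ e

lemma extensions_mono {G G' : Finset (Finset V)} (h : G' ⊆ G) (B : Finset V) :
    extensions G' B ⊆ extensions G B :=
  filter_subset_filter _ h

lemma extensions_eq_empty_of_card_lt {G : Finset (Finset V)} (hG : ∀ e ∈ G, e.card = d)
    {X : Finset V} (hX : d < X.card) : extensions G X = ∅ :=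
  filter_eq_empty_iff.2 fun e he hXe => by
    have := card_le_card hXe
    have := hG e he
    omega

lemma card_extensions_le_one_of_card_eq {G : Finset (Finset V)} (hG : ∀ e ∈ G, e.card = d)
    {X : Finset V} (hX : X.card = d) : #(extensions G X) ≤ 1 :=
  card_le_one_iff_subset_singleton.2 ⟨X, fun e he => by
    obtain ⟨heG, hXe⟩ := mem_filter.1 he
    exact mem_singleton.2 (eq_of_subset_of_card_le hXe (by rw [hG e heG, hX])).symm⟩

end Extensions

section Peeling

variable {V : Type} [Fintype V] [DecidableEq V] {d : ℕ} {ρ : ℝ} {H : Finset (Finset V)}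

variable (d) in
noncomputable def heavySets (r : ℕ) (ρ : ℝ) (G : Finset (Finset V)) : Finset (Finset V) :=
  univ.filter fun B => B.card = d - r ∧ ρ ^ r ≤ #(extensions G B)

lemma mem_heavySets {r : ℕ} {G : Finset (Finset V)} {B : Finset V} :
    B ∈ heavySets d r ρ G ↔ B.card = d - r ∧ ρ ^ r ≤ #(extensions G B) := by
  simp [heavySets]

variable (d ρ H) in
noncomputable def peel : ℕ → Finset (Finset V)
  | 0 => H
  | k + 1 => (peel k).filter fun e => ∀ B ∈ heavySets d (k + 1) ρ (peel k), ¬B ⊆ e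

lemma peel_antitone : Antitone (peel d ρ H) :=
  antitone_nat_of_succ_le fun _ => filter_subset _ _

lemma peel_subset (k : ℕ) : peel d ρ H k ⊆ H :=
  peel_antitone (Nat.zero_le k)

lemma not_subset_of_mem_heavySets {k m : ℕ} (hkm : k < m) {B e : Finset V}
    (hB : B ∈ heavySets d (k + 1) ρ (peel d ρ H k)) (he : e ∈ peel d ρ H m) : ¬B ⊆ e :=
  (mem_filter.1 (peel_antitone (Nat.succ_le_of_lt hkm) he)).2 B hB

lemma card_extensions_peel_lt (hρ : 0 < ρ) {k m : ℕ} (hkm : k < m) {X : Finset V}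
    (hX : X.card = d - (k + 1)) : #(extensions (peel d ρ H m) X) < ρ ^ (k + 1) := by
  obtain hempty | ⟨e, he⟩ := (extensions (peel d ρ H m) X).eq_empty_or_nonempty
  · simpa [hempty] using pow_pos hρ (k + 1)
  by_contra! hheavy
  have hcount : ρ ^ (k + 1) ≤ #(extensions (peel d ρ H k) X) := hheavy.trans <| by
    exact_mod_cast card_le_card (extensions_mono (peel_antitone hkm.le) X)
  obtain ⟨heG, hXe⟩ := mem_filter.1 he
  exact not_subset_of_mem_heavySets hkm (mem_heavySets.2 ⟨hX, hcount⟩) heG hXe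

lemma branching_peel (hρ : 0 < ρ) (hH : ∀ e ∈ H, e.card = d) :
    branching V (peel d ρ H d) ρ := by
  have hG : ∀ e ∈ peel d ρ H d, e.card = d := fun e he => hH e (peel_subset d he)
  intro A r
  by_cases hAr : A.card + r = d
  swap
  · rw [filter_eq_empty_iff.2 fun e he h => hAr (by have := hG e he; omega)]
    simpa using pow_nonneg hρ.le r
  have hsub : (peel d ρ H d).filter (fun e => A ⊆ e ∧ e.card = A.card + r) ⊆
      extensions (peel d ρ H d) A :=
    monotone_filter_right _ fun _ _ h => h.1
  have hcount := card_le_card hsub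
  cases r with
  | zero =>
    have := card_extensions_le_one_of_card_eq hG (X := A) (by omega)
    rw [pow_zero]
    exact_mod_cast hcount.trans this
  | succ k =>
    exact le_trans (by exact_mod_cast hcount)
      (card_extensions_peel_lt hρ (by omega) (by omega : A.card = d - (k + 1))).le

lemma card_extensions_union_le (hρ : 0 < ρ) (hH : ∀ e ∈ H, e.card = d) {k : ℕ} (hkd : k < d)
    {B : Finset V} (hB : B ∈ heavySets d (k + 1) ρ (peel d ρ H k))
    {A : Finset V} (hA : A.Nonempty) (hAB : Disjoint A B) :
    (#(extensions (peel d ρ H k) (B ∪ A)) : ℝ) ≤ ρ ^ (((k + 1 : ℕ) : ℤ) - A.card) := by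
  have hG : ∀ e ∈ peel d ρ H k, e.card = d := fun e he => hH e (peel_subset k he)
  have hcard : (B ∪ A).card = d - (k + 1) + A.card := by
    rw [card_union_of_disjoint hAB.symm, (mem_heavySets.1 hB).1]
  have hA₁ := card_pos.2 hA
  obtain hlt | heq | hgt := lt_trichotomy A.card (k + 1)
  · obtain ⟨j, hj⟩ : ∃ j, k + 1 - A.card = j + 1 := ⟨k - A.card, by omega⟩
    rw [show ((k + 1 : ℕ) : ℤ) - A.card = ((j + 1 : ℕ) : ℤ) by omega, zpow_natCast]
    exact (card_extensions_peel_lt hρ (by omega) (by omega)).le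
  · rw [heq, sub_self, zpow_zero]
    exact_mod_cast card_extensions_le_one_of_card_eq hG (by omega)
  · rw [extensions_eq_empty_of_card_lt hG (by omega), card_empty, Nat.cast_zero]
    exact (zpow_pos hρ _).le

lemma peel_covers (e : Finset V) (he : e ∈ H) (n : ℕ) :
    e ∈ peel d ρ H n ∨ ∃ k < n, ∃ B ∈ heavySets d (k + 1) ρ (peel d ρ H k), B ⊆ e := by
  induction n with
  | zero => exact Or.inl he
  | succ n ih =>
    obtain hmem | ⟨k, hk, hB⟩ := ih
    · by_cases hmem' : e ∈ peel d ρ H (n + 1)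
      · exact Or.inl hmem'
      · simp only [peel, mem_filter, hmem, true_and, not_forall, not_not] at hmem'
        obtain ⟨B, hB, hBe⟩ := hmem'
        exact Or.inr ⟨n, n.lt_succ_self, B, hB, hBe⟩
    · exact Or.inr ⟨k, by omega, hB⟩

lemma hitp_le_hitp_peel_add_sum {p : ℝ} (hp₀ : 0 ≤ p) (hp₁ : p ≤ 1) :
    hitp V p H ≤ hitp V p (peel d ρ H d) +
      ∑ k ∈ range d, hitp V p (heavySets d (k + 1) ρ (peel d ρ H k)) := by
  have hcover : ∀ e ∈ H, ∃ f ∈ peel d ρ H d ∪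
      (range d).biUnion fun k => heavySets d (k + 1) ρ (peel d ρ H k), f ⊆ e := by
    intro e he
    obtain hmem | ⟨k, hk, B, hB, hBe⟩ := peel_covers (d := d) (ρ := ρ) e he d
    · exact ⟨e, mem_union_left _ hmem, subset_rfl⟩
    · exact ⟨B, mem_union_right _ (mem_biUnion.2 ⟨k, mem_range.2 hk, hB⟩), hBe⟩
  calc hitp V p H
      ≤ hitp V p (peel d ρ H d ∪
          (range d).biUnion fun k => heavySets d (k + 1) ρ (peel d ρ H k)) :=
        hitp_le_of_forall_exists_subset hp₀ hp₁ hcover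
    _ ≤ hitp V p (peel d ρ H d) +
          hitp V p ((range d).biUnion fun k => heavySets d (k + 1) ρ (peel d ρ H k)) :=
        hitp_union_le hp₀ hp₁ _ _
    _ ≤ hitp V p (peel d ρ H d) +
          ∑ k ∈ range d, hitp V p (heavySets d (k + 1) ρ (peel d ρ H k)) := by
        gcongr
        exact hitp_biUnion_le hp₀ hp₁ _ _

end Peeling

/-- Critical depth lemma: either `H` has a subhypergraph with branching factor `c/p`
capturing a `1/(d+1)` fraction of `hit_p(H)`, or there is a "critical level" `r` with
a `(d-r)`-uniform hypergraph `I` and a subhypergraph `H' ⊆ H` such that every `e ∈ I`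
has at least `(c/p)^r` extensions in `H'`, every `e ∪ A` (with `A ≠ ∅` disjoint from
`e`) has at most `(c/p)^{r-|A|}` extensions in `H'`, and `hit_p(I) ≥ hit_p(H)/(d+1)`. -/
theorem stmt14 :
    ∀ (d : ℕ), 0 < d → ∀ c : ℝ, 0 < c → ∀ p : ℝ, p ∈ Set.Ioo (0:ℝ) 1 →
      ∀ (V : Type) [Fintype V] [DecidableEq V]
        (H : Finset (Finset V)), (∀ e ∈ H, e.card = d) →
        (∃ H' ⊆ H, branching V H' (c / p) ∧
          hitp V p H / ((d : ℝ) + 1) ≤ hitp V p H') ∨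
        (∃ r : ℕ, 1 ≤ r ∧ r ≤ d ∧
          ∃ I : Finset (Finset V), (∀ e ∈ I, e.card = d - r) ∧
            ∃ H' ⊆ H,
              (∀ e ∈ I, (c / p)^r ≤ ((H'.filter (fun e' => e ⊆ e')).card : ℝ)) ∧
              (∀ e ∈ I, ∀ A : Finset V, A.Nonempty → Disjoint A e →
                ((H'.filter (fun e' => e ∪ A ⊆ e')).card : ℝ) ≤
                  (c / p) ^ ((r : ℤ) - (A.card : ℤ))) ∧
              hitp V p H / ((d : ℝ) + 1) ≤ hitp V p I) := by
  intro d _ c hc p hp V _ _ H hH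
  have hρ : 0 < c / p := div_pos hc hp.1
  have hsplit := le_or_exists_le_of_le_add_sum
    (hitp_le_hitp_peel_add_sum (d := d) (ρ := c / p) (H := H) hp.1.le hp.2.le)
  rw [card_range] at hsplit
  obtain hsurvivors | ⟨k, hk, hheavy⟩ := hsplit
  · exact Or.inl ⟨_, peel_subset d, branching_peel hρ hH, hsurvivors⟩
  · have hkd := mem_range.1 hk
    refine Or.inr ⟨k + 1, by omega, hkd, _, fun e he => (mem_heavySets.1 he).1,
      _, peel_subset k, fun e he => (mem_heavySets.1 he).2,
      fun e he A hA hAe => card_extensions_union_le hρ hH hkd he hA hAe, hheavy⟩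
end
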